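/- arXiv:1405.0022 — 2 statements merged into one kernel-verified Lean document; each statement's English description precedes it below -/
import Mathlib

section
/- Every hyperimmune set has intrinsic lower density 0; that is, if A ⊆ ℕ is infinite and no total computable function dominates its principal function (i.e., for every total computable f : ℕ → ℕ there are infinitely many n with p_A(n) ≥ f(n)), then for every computable permutation π : ℕ → ℕ, the lower asymptotic density of π(A) equals 0. -/
open Filter

open scoped Classical

/-- The `n`-th partial density of `S ⊆ ℕ`: `|S ∩ [0,n)| / n`. -/
noncomputable def partialDensity (S : Set ℕ) (n : ℕ) : ℝ :=
  (((Finset.range n).filter (fun m => m ∈ S)).card : ℝ) / n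

/-- `S` has asymptotic density `d`. -/
def HasDensity (S : Set ℕ) (d : ℝ) : Prop :=
  Tendsto (partialDensity S) atTop (nhds d)

/-- The upper asymptotic density of `S`. -/
noncomputable def upperDensity (S : Set ℕ) : ℝ :=
  limsup (partialDensity S) atTop

/-- The lower asymptotic density of `S`. -/
noncomputable def lowerDensity (S : Set ℕ) : ℝ :=
  liminf (partialDensity S) atTop

/-- A computable permutation of `ℕ`. -/
def ComputablePerm (π : ℕ → ℕ) : Prop :=
  Function.Bijective π ∧ Computable π

/-- `A` is computably enumerable: the domain of a partial computable function. -/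
def CE (A : Set ℕ) : Prop :=
  ∃ f : ℕ →. ℕ, Partrec f ∧ ∀ n, n ∈ A ↔ (f n).Dom

/-- The principal function of `S`: `p_S n` is the least `x` with `|S ∩ [0,x)| ≥ n`. -/
noncomputable def principalFn (S : Set ℕ) (n : ℕ) : ℕ :=
  sInf {x | n ≤ ((Finset.range x).filter (fun m => m ∈ S)).card}

/-!
If `π(A)` had positive lower density, its principal function would be bounded by a linear
function `C n + N`. Since the inverse of `π` is computable, so is the bound `g m` on the
preimages of the numbers below `m`, and then `p_A(n) ≤ g (C n + N)`: a computable function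
would dominate `p_A`, contradicting hyperimmunity.
-/

lemma Computable.find_preimage {π : ℕ → ℕ} (hc : Computable π) (hs : Function.Surjective π) :
    Computable fun k => Nat.find (hs k) :=
  Computable.find (P := fun k n => π n = k)
    (Primrec.eq.decide.to_comp.comp (hc.comp .snd) .fst).computablePred hs

lemma Computable.exists_computable_prefix_bound {f : ℕ → ℕ} (hf : Computable f) :
    ∃ g : ℕ → ℕ, Computable g ∧ ∀ k m, k < m → f k < g m := by
  refine ⟨fun m => Nat.rec 0 (fun k acc => max acc (f k + 1)) m, ?_, fun k m hkm => ?_⟩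
  · exact Computable.nat_rec .id (.const 0)
      (Primrec.nat_max.to_comp.comp (Computable.snd.comp .snd)
        (Computable.succ.comp (hf.comp (Computable.fst.comp .snd)))).to₂
  · induction m with
    | zero => omega
    | succ m ih =>
      rcases Nat.lt_succ_iff_lt_or_eq.1 hkm with h | rfl
      · exact (ih h).trans_le (le_max_left _ _)
      · exact (Nat.lt_succ_self _).trans_le (le_max_right _ _)

lemma ComputablePerm.exists_computable_preimage_bound {π : ℕ → ℕ} (hπ : ComputablePerm π) :
    ∃ g : ℕ → ℕ, Computable g ∧ ∀ a m, π a < m → a < g m := by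
  obtain ⟨⟨hinj, hsurj⟩, hc⟩ := hπ
  obtain ⟨g, hg, hbound⟩ := (hc.find_preimage hsurj).exists_computable_prefix_bound
  refine ⟨g, hg, fun a m ham => ?_⟩
  have : Nat.find (hsurj (π a)) = a := hinj (Nat.find_spec (hsurj (π a)))
  exact this ▸ hbound (π a) m ham

lemma principalFn_le_of_le_count {S : Set ℕ} {n x : ℕ} (h : n ≤ Nat.count (· ∈ S) x) :
    principalFn S n ≤ x :=
  Nat.sInf_le (by rwa [Nat.count_eq_card_filter_range] at h)

lemma count_image_le (π : ℕ → ℕ) (A : Set ℕ) {m b : ℕ}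
    (hb : ∀ a, π a < m → a < b) : Nat.count (· ∈ π '' A) m ≤ Nat.count (· ∈ A) b := by
  simp only [Nat.count_eq_card_filter_range]
  calc _ ≤ (((Finset.range b).filter (· ∈ A)).image π).card := by
        refine Finset.card_le_card fun y hy => ?_
        obtain ⟨hym, a, ha, rfl⟩ := by simpa using hy
        simpa using ⟨a, ⟨hb a hym, ha⟩, rfl⟩
    _ ≤ _ := Finset.card_image_le

lemma partialDensity_nonneg (S : Set ℕ) (n : ℕ) : 0 ≤ partialDensity S n := by
  unfold partialDensity; positivity

lemma partialDensity_le_one (S : Set ℕ) (n : ℕ) : partialDensity S n ≤ 1 := by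
  unfold partialDensity
  refine div_le_one_of_le₀ ?_ n.cast_nonneg
  exact_mod_cast (Finset.card_filter_le _ _).trans (Finset.card_range n).le

lemma lowerDensity_nonneg (S : Set ℕ) : 0 ≤ lowerDensity S :=
  le_liminf_of_le (isBoundedUnder_of ⟨1, partialDensity_le_one S⟩).isCoboundedUnder_ge
    (.of_forall (partialDensity_nonneg S))

lemma exists_le_mul_count_of_lowerDensity_pos {S : Set ℕ} (h : 0 < lowerDensity S) :
    ∃ C N : ℕ, 0 < C ∧ ∀ m ≥ N, m ≤ C * Nat.count (· ∈ S) m := by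
  obtain ⟨ε, hε, hεS⟩ := exists_between h
  obtain ⟨N, hN⟩ := eventually_atTop.1 <|
    eventually_lt_of_lt_liminf hεS (isBoundedUnder_of ⟨0, partialDensity_nonneg S⟩)
  obtain ⟨C, hC⟩ := exists_nat_gt ε⁻¹
  refine ⟨C, N, by exact_mod_cast (inv_pos.2 hε).trans hC, fun m hm => ?_⟩
  rcases m.eq_zero_or_pos with rfl | hm0
  · exact Nat.zero_le _
  have hεm : ε * m < Nat.count (· ∈ S) m := by
    rw [Nat.count_eq_card_filter_range, ← lt_div_iff₀ (by positivity)]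
    exact hN m hm
  have hεC : 1 < C * ε := (inv_lt_iff_one_lt_mul₀ hε).1 hC
  have : (m : ℝ) ≤ C * Nat.count (· ∈ S) m := by nlinarith
  exact_mod_cast this

lemma exists_le_count_of_lowerDensity_pos {S : Set ℕ} (h : 0 < lowerDensity S) :
    ∃ C N : ℕ, ∀ n, n ≤ Nat.count (· ∈ S) (C * n + N) := by
  obtain ⟨C, N, hC, hS⟩ := exists_le_mul_count_of_lowerDensity_pos h
  exact ⟨C, N, fun n => le_of_mul_le_mul_left
    ((Nat.le_add_right _ _).trans (hS _ (Nat.le_add_left _ _))) hC⟩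

theorem hyperimmune_intrinsicLowerDensity_zero_general (A : Set ℕ)
    (hhi : ∀ f : ℕ → ℕ, Computable f →
      ∃ᶠ n in atTop, f n ≤ principalFn A n) :
    ∀ π : ℕ → ℕ, ComputablePerm π → lowerDensity (π '' A) = 0 := by
  intro π hπ
  refine le_antisymm (not_lt.1 fun hpos => ?_) (lowerDensity_nonneg _)
  obtain ⟨C, N, hcount⟩ := exists_le_count_of_lowerDensity_pos hpos
  obtain ⟨g, hg, hbound⟩ := hπ.exists_computable_preimage_bound
  have hdom : ∀ n, principalFn A n < g (C * n + N) + 1 := fun n =>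
    Nat.lt_succ_of_le <| principalFn_le_of_le_count <|
      (hcount n).trans (count_image_le π A (hbound · _))
  have hcomp : Computable fun n => g (C * n + N) + 1 :=
    Computable.succ.comp <| hg.comp
      (Primrec.nat_add.comp (Primrec.nat_mul.comp (.const C) .id) (.const N)).to_comp
  obtain ⟨n, hn⟩ := (hhi _ hcomp).exists
  exact (hdom n).not_ge hn

theorem hyperimmune_intrinsicLowerDensity_zero (A : Set ℕ) (hinf : A.Infinite)
    (hhi : ∀ f : ℕ → ℕ, Computable f →
      ∃ᶠ n in atTop, f n ≤ principalFn A n) :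
    ∀ π : ℕ → ℕ, ComputablePerm π → lowerDensity (π '' A) = 0 :=
  hyperimmune_intrinsicLowerDensity_zero_general A hhi
end

section
/- The halting problem is not weakly intrinsically generic-case computable: there exists a computable permutation π : ℕ → ℕ such that π(K) is not generic-case computable, where K = {e ∈ ℕ : φ_e(e) converges} is the halting set. -/
open Filter

open scoped Classical

/-- The `e`-th partial computable function, via the standard numbering of codes. -/
def phi (e : ℕ) : ℕ →. ℕ := (Denumerable.ofNat Nat.Partrec.Code e).eval

/-- The halting set `K = {e : φ_e(e)↓}`. -/
def haltingSet : Set ℕ := {e | (phi e e).Dom}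

/-- `f` is a partial description of `A`: wherever `f` converges, it agrees with
the characteristic function of `A`. -/
def PartialDescription (f : ℕ →. Bool) (A : Set ℕ) : Prop :=
  ∀ n b, b ∈ f n → (b = true ↔ n ∈ A)

/-- `A` is generic-case computable: it has a partial computable partial
description whose domain has density 1. -/
def GenericCaseComputable (A : Set ℕ) : Prop :=
  ∃ f : ℕ →. Bool, Partrec f ∧ PartialDescription f A ∧
    HasDensity {n | (f n).Dom} 1

/-!
If `f` is a generic description of `π(K)`, the `n` with `f (π n) = false` form a c.e. set
`W_e ⊆ ℕ \ K`. Every index of `φ_e`, in particular each padded index `p(e, j)`, lies outside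
`K` (else `φ_e` would halt on it) and outside `W_e` (else it would lie in `K`), so `f` diverges at
every `π (p(e, j))`. The permutation is built greedily so that the positions `x` with
`x + 1 = 2 ^ (e + 1) * odd`, a set of density `2 ^ -(e + 2)`, all receive padded indices of `e`;
hence the domain of `f` cannot have density `1`.
-/

open Function

section Density

variable {S T : Set ℕ}

theorem partialDensity_mono (h : S ⊆ T) (n : ℕ) :
    partialDensity S n ≤ partialDensity T n := by
  unfold partialDensity
  gcongr

theorem partialDensity_add_le_one (h : Disjoint S T) (n : ℕ) :
    partialDensity S n + partialDensity T n ≤ 1 := by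
  rcases Nat.eq_zero_or_pos n with rfl | hn
  · simp [partialDensity]
  have hcard : ((Finset.range n).filter (· ∈ S)).card + ((Finset.range n).filter (· ∈ T)).card
      ≤ n := by
    rw [← Finset.card_union_of_disjoint
      (Finset.disjoint_filter.2 fun _ _ hS => Set.disjoint_left.1 h hS)]
    exact (Finset.card_le_card (Finset.union_subset (Finset.filter_subset _ _)
      (Finset.filter_subset _ _))).trans (Finset.card_range n).le
  unfold partialDensity
  rw [← add_div, div_le_one (by exact_mod_cast hn)]
  exact_mod_cast hcard

theorem not_hasDensity_one_of_disjoint (h : Disjoint S T) {c : ℝ} (hc : 0 < c)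
    (hT : ∃ᶠ n in atTop, c ≤ partialDensity T n) : ¬HasDensity S 1 := fun hS => by
  obtain ⟨n, hTn, hSn⟩ :=
    (hT.and_eventually (hS.eventually (lt_mem_nhds (sub_lt_self 1 hc)))).exists
  linarith [partialDensity_add_le_one h n]

end Density

section Padding

open Nat.Partrec (Code)
open Encodable (encode)

def Nat.Partrec.Code.pad (c : Code) (j : ℕ) : Code := (fun c => c.comp Code.id)^[j] c

theorem Nat.Partrec.Code.eval_pad (c : Code) (j : ℕ) : (c.pad j).eval = c.eval := by
  induction j with
  | zero => rfl
  | succ j ih =>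
    funext n
    rw [Code.pad, iterate_succ_apply', ← Code.pad, Code.eval, ih]
    simp only [Code.eval_id]
    exact Part.bind_some _ _

theorem Nat.Partrec.Code.encode_pad_strictMono (c : Code) : StrictMono fun j => encode (c.pad j) :=
  strictMono_nat_of_lt_succ fun j => by
    simpa only [Code.pad, iterate_succ_apply'] using (Code.encode_lt_comp _ _).1

theorem Nat.Partrec.Code.primrec₂_pad : Primrec₂ Code.pad :=
  Primrec.nat_iterate Primrec.snd Primrec.fst
    (Code.primrec₂_comp.comp Primrec.snd (_root_.Primrec.const Code.id))

def padIndex (e j : ℕ) : ℕ := encode ((Denumerable.ofNat Code e).pad j)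

theorem phi_padIndex (e j : ℕ) : phi (padIndex e j) = phi e := by
  simp only [phi, padIndex, Denumerable.ofNat_encode, Code.eval_pad]

theorem padIndex_injective (e : ℕ) : Injective (padIndex e) :=
  (Code.encode_pad_strictMono _).injective

theorem primrec₂_padIndex : Primrec₂ padIndex :=
  Primrec.encode.comp (Code.primrec₂_pad.comp ((Primrec.ofNat Code).comp Primrec.fst) Primrec.snd)

theorem padIndex_notMem_haltingSet {e : ℕ} (h : ∀ n, (phi e n).Dom → n ∉ haltingSet) (j : ℕ) :
    padIndex e j ∉ haltingSet ∧ ¬(phi e (padIndex e j)).Dom := by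
  have hK : padIndex e j ∈ haltingSet ↔ (phi e (padIndex e j)).Dom := by
    change (phi _ _).Dom ↔ _
    rw [phi_padIndex]
  exact ⟨fun hj => h _ (hK.1 hj) hj, fun hj => h _ hj (hK.2 hj)⟩

end Padding

section Productive

open Nat.Partrec (Code)

theorem exists_phi_eq {g : ℕ →. ℕ} (hg : Partrec g) : ∃ e, phi e = g :=
  let ⟨c, hc⟩ := Code.exists_code.1 (Partrec.nat_iff.1 hg)
  ⟨Encodable.encode c, by rw [phi, Denumerable.ofNat_encode, hc]⟩

theorem exists_phi_dom_iff_false_mem {p : ℕ →. Bool} (hp : Partrec p) :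
    ∃ e, ∀ n, (phi e n).Dom ↔ false ∈ p n := by
  have hF : Partrec fun n => (p n).bind fun b => bif b then Part.none else Part.some 0 :=
    hp.bind (Partrec.cond Computable.snd Partrec.none (Computable.const 0).partrec)
  obtain ⟨e, he⟩ := exists_phi_eq hF
  refine ⟨e, fun n => ?_⟩
  rw [he]
  constructor
  · rintro ⟨hdom, hval⟩
    cases hb : (p n).get hdom
    · exact hb ▸ Part.get_mem hdom
    · simp [hb] at hval
  · intro h
    simp [Part.eq_some_iff.2 h]

theorem exists_forall_not_dom_padIndex {π : ℕ → ℕ} (hπ : Computable π)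
    (hinj : Injective π) {f : ℕ →. Bool} (hf : Partrec f)
    (hdesc : PartialDescription f (π '' haltingSet)) :
    ∃ e, ∀ j, ¬(f (π (padIndex e j))).Dom := by
  obtain ⟨e, he⟩ := exists_phi_dom_iff_false_mem (hf.comp hπ)
  have hW : ∀ n, (phi e n).Dom → n ∉ haltingSet := fun n hn hK =>
    absurd ((hdesc _ false ((he n).1 hn)).2 ⟨n, hK, rfl⟩) Bool.false_ne_true
  refine ⟨e, fun j hdom => ?_⟩
  obtain ⟨hK, hW'⟩ := padIndex_notMem_haltingSet hW j
  cases hb : (f (π (padIndex e j))).get hdom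
  · exact hW' ((he _).2 (hb ▸ Part.get_mem hdom))
  · obtain ⟨n, hn, hnj⟩ := (hdesc _ true (hb ▸ Part.get_mem hdom)).1 rfl
    exact hK (hinj hnj ▸ hn)

end Productive

section Greedy

/-- The search bound suffices when `c` is injective: one of `c 0, …, c l.length` is missing
from `l`. -/
def freshIdx (c : ℕ → ℕ) (l : List ℕ) : ℕ :=
  (List.range (l.length + 1)).findIdx fun j => c j ∉ l

theorem freshIdx_spec {c : ℕ → ℕ} (hc : Injective c) (l : List ℕ) :
    c (freshIdx c l) ∉ l ∧ ∀ i < freshIdx c l, c i ∈ l := by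
  have hex : ∃ j, c j ∉ l := by
    obtain ⟨_, ⟨j, rfl⟩, hj⟩ :=
      (Set.infinite_range_of_injective hc).exists_notMem_finset l.toFinset
    exact ⟨j, by simpa using hj⟩
  have hmin (i : ℕ) (hi : i < Nat.find hex) : c i ∈ l := not_not.1 (Nat.find_min hex hi)
  have hle : Nat.find hex ≤ l.length := by
    have hsub : (Finset.range (Nat.find hex)).image c ⊆ l.toFinset := fun x hx => by
      obtain ⟨i, hi, rfl⟩ := Finset.mem_image.1 hx
      exact List.mem_toFinset.2 (hmin i (Finset.mem_range.1 hi))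
    have := Finset.card_le_card hsub
    rw [Finset.card_image_of_injective _ hc, Finset.card_range] at this
    exact this.trans (List.toFinset_card_le l)
  have hfind : freshIdx c l = Nat.find hex :=
    (List.findIdx_eq (by simpa using Nat.lt_succ_of_le hle)).2
      ⟨by simpa using Nat.find_spec hex, fun i hi => by simpa using hmin i hi⟩
  exact hfind ▸ ⟨Nat.find_spec hex, hmin⟩

variable (G : ℕ → ℕ → ℕ)

def greedyUsed : ℕ → List ℕ
  | 0 => []
  | x + 1 => G x (freshIdx (G x) (greedyUsed x)) :: greedyUsed x

def greedyAssign (x : ℕ) : ℕ := G x (freshIdx (G x) (greedyUsed G x))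

theorem greedyUsed_succ (x : ℕ) : greedyUsed G (x + 1) = greedyAssign G x :: greedyUsed G x := rfl

theorem mem_greedyUsed {x v : ℕ} : v ∈ greedyUsed G x ↔ ∃ y < x, greedyAssign G y = v := by
  induction x with
  | zero => simp [greedyUsed]
  | succ x ih =>
    simp only [greedyUsed_succ, List.mem_cons, ih, Nat.lt_succ_iff_lt_or_eq]
    grind

variable {G}

theorem greedyAssign_notMem_greedyUsed (hG : ∀ x, Injective (G x)) (x : ℕ) :
    greedyAssign G x ∉ greedyUsed G x :=
  (freshIdx_spec (hG x) _).1

theorem greedyAssign_injective (hG : ∀ x, Injective (G x)) :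
    Injective (greedyAssign G) := by
  have key {x y : ℕ} (hxy : x < y) : greedyAssign G x ≠ greedyAssign G y := fun h =>
    greedyAssign_notMem_greedyUsed hG y ((mem_greedyUsed G).2 ⟨x, hxy, h⟩)
  intro x y h
  rcases lt_trichotomy x y with hxy | rfl | hxy
  · exact absurd h (key hxy)
  · rfl
  · exact absurd h.symm (key hxy)

/-- Each position where `G x` is the identity takes the least value not yet used, so a value
missed forever would bound infinitely many distinct values. -/
theorem greedyAssign_surjective (hG : ∀ x, Injective (G x))
    (hid : {x | G x = id}.Infinite) : Surjective (greedyAssign G) := by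
  intro n
  by_contra! hn
  have hle (x : ℕ) (hx : G x = id) : greedyAssign G x ≤ n := by
    have hfresh := (freshIdx_spec (hG x) (greedyUsed G x)).2 n
    simp only [greedyAssign, hx, id] at hfresh ⊢
    by_contra! hlt
    obtain ⟨y, -, hy⟩ := (mem_greedyUsed G).1 (hfresh hlt)
    exact hn y hy
  exact hid (((Set.finite_Iic n).subset (Set.image_subset_iff.2 hle)).of_finite_image
    (greedyAssign_injective hG).injOn)

theorem primrec_greedyAssign (hG : Primrec₂ G) : Primrec (greedyAssign G) := by
  have hnotMem : PrimrecRel fun (l : List ℕ) (n : ℕ) => n ∉ l :=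
    (PrimrecRel.exists_mem_list Primrec.eq).not.of_eq (by simp)
  have hfresh : Primrec₂ fun x l => freshIdx (G x) l :=
    Primrec.list_findIdx (Primrec.list_range.comp (Primrec.succ.comp
      (Primrec.list_length.comp Primrec.snd)))
      (hnotMem.decide.comp (Primrec.snd.comp Primrec.fst)
        (hG.comp (Primrec.fst.comp Primrec.fst) Primrec.snd))
  have hstep : Primrec₂ fun x l => G x (freshIdx (G x) l) := hG.comp Primrec.fst hfresh
  have hused : Primrec (greedyUsed G) :=
    (Primrec.nat_rec₁ [] (Primrec.list_cons.comp₂ hstep Primrec₂.right)).of_eq fun x => by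
      induction x <;> simp [greedyUsed, *]
  exact hstep.comp Primrec.id hused

end Greedy

theorem ComputablePerm.surjInv {σ : ℕ → ℕ} (hσ : ComputablePerm σ) :
    ComputablePerm (surjInv hσ.1.2) := by
  refine ⟨⟨injective_surjInv _, (leftInverse_surjInv hσ.1).surjective⟩, ?_⟩
  have hP : ComputablePred fun p : ℕ × ℕ => σ p.2 = p.1 :=
    Computable.computablePred
      (Primrec.eq.decide.to_comp.comp (hσ.2.comp Computable.snd) Computable.fst)
  refine (Computable.find hP hσ.1.2).of_eq fun n => hσ.1.1 ?_
  rw [Nat.find_spec (hσ.1.2 n), surjInv_eq hσ.1.2]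

/-- For odd `x` this is `v₂(x + 1) - 1`: position `x` is reserved for the index `e` whenever
`x + 1 = 2 ^ (e + 1) * (2 * m + 1)`. -/
def reservedIndex (x : ℕ) : ℕ := Nat.findGreatest (fun k => 2 ^ (k + 1) ∣ x + 1) x

theorem reservedIndex_two_pow_mul_sub_one (e m : ℕ) :
    reservedIndex (2 ^ (e + 1) * (2 * m + 1) - 1) = e := by
  have hpos : 1 ≤ 2 ^ (e + 1) * (2 * m + 1) := Nat.one_le_iff_ne_zero.2 (by positivity)
  have hlt : e + 1 < 2 ^ (e + 1) := Nat.lt_two_pow_self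
  have hle : 2 ^ (e + 1) ≤ 2 ^ (e + 1) * (2 * m + 1) := Nat.le_mul_of_pos_right _ (by omega)
  refine Nat.findGreatest_eq_iff.2 ⟨by omega, fun _ => ?_, fun k hek _ hdvd => ?_⟩
  · rw [Nat.sub_add_cancel hpos]
    exact dvd_mul_right _ _
  · rw [Nat.sub_add_cancel hpos] at hdvd
    have h2 : 2 ^ (e + 1) * 2 ∣ 2 ^ (e + 1) * (2 * m + 1) :=
      (pow_succ 2 (e + 1) ▸ pow_dvd_pow 2 (by omega : e + 2 ≤ k + 1)).trans hdvd
    have := Nat.dvd_of_mul_dvd_mul_left (by positivity) h2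
    omega

theorem primrec_reservedIndex : Primrec reservedIndex := by
  have hpow : Primrec₂ fun a b : ℕ => a ^ b := Primrec₂.unpaired'.1 Nat.Primrec.pow
  have hdvd : PrimrecRel fun x k : ℕ => 2 ^ (k + 1) ∣ x + 1 :=
    (Primrec.eq.comp (Primrec.nat_mod.comp (Primrec.succ.comp Primrec.fst)
      (hpow.comp (Primrec.const 2) (Primrec.succ.comp Primrec.snd))) (Primrec.const 0)).of_eq
      fun _ => (Nat.dvd_iff_mod_eq_zero ..).symm
  exact Primrec.nat_findGreatest Primrec.id hdvd

theorem frequently_le_partialDensity_reserved (e : ℕ) :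
    ∃ᶠ n in atTop, 1 / 2 ^ (e + 2) ≤
      partialDensity {x | x % 2 = 1 ∧ reservedIndex x = e} n := by
  refine frequently_atTop.2 fun M => ⟨2 ^ (e + 2) * (M + 1), ?_, ?_⟩
  · exact (Nat.le_succ M).trans (Nat.le_mul_of_pos_left _ (by positivity))
  set slot : ℕ → ℕ := fun m => 2 ^ (e + 1) * (2 * m + 1) - 1
  have hslot : Injective slot := fun m m' h => by
    have := Nat.eq_of_mul_eq_mul_left (by positivity)
      (Nat.sub_one_cancel (by positivity) (by positivity) h)
    omega
  have hsub : (Finset.range (M + 1)).image slot ⊆ (Finset.range (2 ^ (e + 2) * (M + 1))).filter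
      (· ∈ {x | x % 2 = 1 ∧ reservedIndex x = e}) := by
    intro x hx
    obtain ⟨m, hm, rfl⟩ := Finset.mem_image.1 hx
    have hm : 2 * m + 1 ≤ 2 * (M + 1) := by rw [Finset.mem_range] at hm; omega
    have hbound := Nat.mul_le_mul_left (2 ^ e) hm
    have hpos : 0 < 2 ^ e * (2 * m + 1) := by positivity
    have hslot_eq : slot m = 2 * (2 ^ e * (2 * m + 1)) - 1 := by
      show 2 ^ (e + 1) * (2 * m + 1) - 1 = _
      congr 1
      ring
    have hN : 2 ^ (e + 2) * (M + 1) = 2 * (2 ^ e * (2 * (M + 1))) := by ring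
    refine Finset.mem_filter.2
      ⟨Finset.mem_range.2 ?_, ?_, reservedIndex_two_pow_mul_sub_one e m⟩
    · omega
    · show slot m % 2 = 1
      omega
  have hcard := Finset.card_le_card hsub
  rw [Finset.card_image_of_injective _ hslot, Finset.card_range] at hcard
  unfold partialDensity
  rw [div_le_div_iff₀ (by positivity) (by positivity)]
  push_cast
  rw [one_mul, mul_comm]
  gcongr
  exact_mod_cast hcard.trans_eq (by congr)

def reservedSchedule (g : ℕ → ℕ → ℕ) (x j : ℕ) : ℕ :=
  if x % 2 = 1 then g (reservedIndex x) j else j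

theorem exists_computablePerm_frequently_le_partialDensity_image {g : ℕ → ℕ → ℕ}
    (hg : Primrec₂ g) (hinj : ∀ e, Injective (g e)) :
    ∃ π, ComputablePerm π ∧ ∀ e, ∃ c > 0, ∃ᶠ n in atTop,
      c ≤ partialDensity (π '' Set.range (g e)) n := by
  have hG : ∀ x, Injective (reservedSchedule g x) := fun x => by
    unfold reservedSchedule
    split
    · exact hinj _
    · exact injective_id
  have hid : {x | reservedSchedule g x = id}.Infinite :=
    Set.infinite_of_forall_exists_gt fun a =>
      ⟨2 * a + 2, funext fun j => by simp [reservedSchedule], by omega⟩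
  have hprim : Primrec₂ (reservedSchedule g) :=
    Primrec.ite (Primrec.eq.comp (Primrec.nat_mod.comp Primrec.fst (Primrec.const 2))
      (Primrec.const 1)) (hg.comp (primrec_reservedIndex.comp Primrec.fst) Primrec.snd)
      Primrec.snd
  have hσ : ComputablePerm (greedyAssign (reservedSchedule g)) :=
    ⟨⟨greedyAssign_injective hG, greedyAssign_surjective hG hid⟩,
      (primrec_greedyAssign hprim).to_comp⟩
  refine ⟨_, hσ.surjInv, fun e => ⟨_, by positivity, (frequently_le_partialDensity_reserved e).mono
    fun n hn => hn.trans (partialDensity_mono ?_ n)⟩⟩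
  rintro x ⟨hodd, rfl⟩
  have hrange : greedyAssign (reservedSchedule g) x ∈ Set.range (g (reservedIndex x)) :=
    ⟨_, (if_pos hodd).symm⟩
  exact ⟨_, hrange, leftInverse_surjInv hσ.1 x⟩

theorem halting_not_weakly_intrinsically_gc :
    ∃ π : ℕ → ℕ, ComputablePerm π ∧
      ¬GenericCaseComputable (π '' haltingSet) := by
  obtain ⟨π, hπ, hdense⟩ :=
    exists_computablePerm_frequently_le_partialDensity_image primrec₂_padIndex padIndex_injective
  refine ⟨π, hπ, fun ⟨f, hf, hdesc, hdens⟩ => ?_⟩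
  obtain ⟨e, he⟩ := exists_forall_not_dom_padIndex hπ.2 hπ.1.1 hf hdesc
  obtain ⟨c, hc, hfreq⟩ := hdense e
  refine not_hasDensity_one_of_disjoint ?_ hc hfreq hdens
  rw [Set.disjoint_left]
  rintro _ hdom ⟨_, ⟨j, rfl⟩, rfl⟩
  exact he j hdom
end
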